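/- arXiv:1402.4534 — 2 statements merged into one kernel-verified Lean document; each statement's English description precedes it below -/
import Mathlib

section
/- For $1 < \alpha < 2$, the sequence $q_i = \frac{\alpha}{\Gamma(2-\alpha)} \frac{\Gamma(i+1-\alpha)}{\Gamma(i+2)}$, $i \geq 1$, satisfies $\sum_{i \geq 1} i q_i = \frac{1}{\alpha - 1}$. -/
open Real Filter Topology

/-!
Put `G x = (α x + 1) Γ(x + 2 - α) / Γ(x + 2)`. The functional equation `Γ(s + 1) = s Γ(s)` gives
`G i - G (i + 1) = α (α - 1) (i + 1) Γ(i + 2 - α) / Γ(i + 3)`, so the series telescopes to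
`G 0 / ((α - 1) Γ(2 - α)) = 1 / (α - 1)` provided `G n → 0`. For that, log-convexity of `Γ`
yields Wendel's bound `Γ(s + t) ≤ Γ(s) s^t` for `0 ≤ t ≤ 1`, hence `G n = O(n^(1 - α))`.
-/

theorem Real.Gamma_add_le_Gamma_mul_rpow {s t : ℝ} (hs : 0 < s) (ht₀ : 0 ≤ t) (ht₁ : t ≤ 1) :
    Gamma (s + t) ≤ Gamma s * s ^ t := by
  rcases ht₀.eq_or_lt with rfl | ht₀
  · simp
  rcases ht₁.eq_or_lt with rfl | ht₁
  · rw [Gamma_add_one hs.ne', rpow_one, mul_comm]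
  have hΓ : 0 < Gamma s := Gamma_pos_of_pos hs
  calc Gamma (s + t) = Gamma ((1 - t) * s + t * (s + 1)) := by ring_nf
    _ ≤ Gamma s ^ (1 - t) * Gamma (s + 1) ^ t :=
      Gamma_mul_add_mul_le_rpow_Gamma_mul_rpow_Gamma hs (by linarith) (by linarith) ht₀ (by ring)
    _ = Gamma s ^ ((1 - t) + t) * s ^ t := by
      rw [Gamma_add_one hs.ne', mul_rpow hs.le hΓ.le, rpow_add hΓ]; ring
    _ = Gamma s * s ^ t := by rw [sub_add_cancel, rpow_one]

theorem Real.Gamma_add_two_sub_div_Gamma_add_two_le {x a : ℝ} (hx : 0 < x) (ha₁ : 1 ≤ a)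
    (ha₂ : a ≤ 2) : Gamma (x + 2 - a) / Gamma (x + 2) ≤ x ^ (1 - a) / (x + 1) := by
  have hΓ2 : Gamma (x + 2) = (x + 1) * (x * Gamma x) := by
    rw [show x + 2 = x + 1 + 1 by ring, Gamma_add_one (by positivity), Gamma_add_one hx.ne']
  have hx2a : x ^ (2 - a) = x * x ^ (1 - a) := by
    rw [show 2 - a = 1 + (1 - a) by ring, rpow_add hx, rpow_one]
  rw [hΓ2, div_le_div_iff₀ (by positivity) (by positivity)]
  calc Gamma (x + 2 - a) * (x + 1) = Gamma (x + (2 - a)) * (x + 1) := by ring_nf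
    _ ≤ Gamma x * x ^ (2 - a) * (x + 1) := by
      gcongr
      exact Gamma_add_le_Gamma_mul_rpow hx (by linarith) (by linarith)
    _ = x ^ (1 - a) * ((x + 1) * (x * Gamma x)) := by rw [hx2a]; ring

theorem hasSum_sub_succ_of_antitone {g : ℕ → ℝ} {l : ℝ} (hg : Antitone g)
    (hl : Tendsto g atTop (𝓝 l)) : HasSum (fun n ↦ g n - g (n + 1)) (g 0 - l) := by
  rw [hasSum_iff_tendsto_nat_of_nonneg (fun n ↦ sub_nonneg.mpr (hg n.le_succ))]
  simp_rw [Finset.sum_range_sub']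
  exact tendsto_const_nhds.sub hl

noncomputable def telescopingPotential (a x : ℝ) : ℝ :=
  (a * x + 1) * (Gamma (x + 2 - a) / Gamma (x + 2))

theorem telescopingPotential_sub_add_one {a x : ℝ} (hx : 0 < x + 2) (hxa : x + 2 - a ≠ 0) :
    telescopingPotential a x - telescopingPotential a (x + 1) =
      a * (a - 1) * ((x + 1) * (Gamma (x + 2 - a) / Gamma (x + 3))) := by
  have hΓ : Gamma (x + 2) ≠ 0 := (Gamma_pos_of_pos hx).ne'
  have h3 : Gamma (x + 3) = (x + 2) * Gamma (x + 2) := by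
    rw [show x + 3 = x + 2 + 1 by ring, Gamma_add_one hx.ne']
  have h3a : Gamma (x + 1 + 2 - a) = (x + 2 - a) * Gamma (x + 2 - a) := by
    rw [show x + 1 + 2 - a = x + 2 - a + 1 by ring, Gamma_add_one hxa]
  rw [telescopingPotential, telescopingPotential, h3a, show x + 1 + 2 = x + 3 by ring, h3]
  field_simp
  ring

theorem tendsto_telescopingPotential_natCast {a : ℝ} (ha₁ : 1 < a) (ha₂ : a ≤ 2) :
    Tendsto (fun n : ℕ ↦ telescopingPotential a n) atTop (𝓝 0) := by
  have hpow : Tendsto (fun n : ℕ ↦ a * (n : ℝ) ^ (1 - a)) atTop (𝓝 0) := by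
    have := (tendsto_rpow_neg_atTop (sub_pos.mpr ha₁)).comp tendsto_natCast_atTop_atTop
    simpa [Function.comp_def] using this.const_mul a
  refine squeeze_zero' (eventually_atTop.mpr ⟨1, fun n hn ↦ ?_⟩)
    (eventually_atTop.mpr ⟨1, fun n hn ↦ ?_⟩) hpow
  all_goals have hn : (1 : ℝ) ≤ n := by exact_mod_cast hn
  · exact mul_nonneg (by positivity) (div_nonneg (Gamma_pos_of_pos (by linarith)).le
      (Gamma_pos_of_pos (by linarith)).le)
  · calc telescopingPotential a n ≤ (a * n + 1) * ((n : ℝ) ^ (1 - a) / (n + 1)) :=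
          mul_le_mul_of_nonneg_left
            (Gamma_add_two_sub_div_Gamma_add_two_le (by linarith) ha₁.le ha₂) (by nlinarith)
      _ ≤ (a * n + a) * ((n : ℝ) ^ (1 - a) / (n + 1)) :=
          mul_le_mul_of_nonneg_right (by linarith) (by positivity)
      _ = a * (n : ℝ) ^ (1 - a) := by field_simp

/-- For `1 < α < 2`, the sequence `q i = α/Γ(2-α) · Γ(i+1-α)/Γ(i+2)`, `i ≥ 1`,
satisfies `∑_{i ≥ 1} i q_i = 1/(α-1)`. -/
theorem stmt_0 (α : ℝ) (hα1 : 1 < α) (hα2 : α < 2) :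
    HasSum (fun i : ℕ => ((i : ℝ) + 1) *
      (α / Real.Gamma (2 - α) *
        (Real.Gamma (((i : ℝ) + 1) + 1 - α) / Real.Gamma (((i : ℝ) + 1) + 2))))
      (1 / (α - 1)) := by
  have hΓ : 0 < Gamma (2 - α) := Gamma_pos_of_pos (by linarith)
  have hdiff (n : ℕ) : telescopingPotential α n - telescopingPotential α (n + 1 : ℕ) =
      α * (α - 1) * ((n + 1) * (Gamma (n + 2 - α) / Gamma (n + 3))) := by
    push_cast
    exact telescopingPotential_sub_add_one (by positivity) (by linarith [n.cast_nonneg (α := ℝ)])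
  have hterm_nonneg (n : ℕ) : 0 ≤ α * (α - 1) * ((n + 1) * (Gamma (n + 2 - α) / Gamma (n + 3))) :=
    mul_nonneg (mul_pos (by linarith) (by linarith)).le <| mul_nonneg (by positivity) <|
      div_nonneg (Gamma_pos_of_pos (by linarith [n.cast_nonneg (α := ℝ)])).le (by positivity)
  have hsum := (hasSum_sub_succ_of_antitone
    (antitone_nat_of_succ_le fun n ↦ sub_nonneg.mp (hdiff n ▸ hterm_nonneg n))
    (tendsto_telescopingPotential_natCast hα1 hα2.le)).mul_left (1 / ((α - 1) * Gamma (2 - α)))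
  have hvalue : 1 / ((α - 1) * Gamma (2 - α)) * (telescopingPotential α (0 : ℕ) - 0) =
      1 / (α - 1) := by
    simp only [telescopingPotential, Nat.cast_zero, mul_zero, zero_add, Gamma_two, sub_zero]
    field_simp
  rw [hvalue] at hsum
  refine hsum.congr_fun fun i ↦ ?_
  have hα : α - 1 ≠ 0 := by linarith
  rw [hdiff, show (i : ℝ) + 1 + 1 - α = i + 2 - α by ring, show (i : ℝ) + 1 + 2 = i + 3 by ring]
  field_simp
end

section
/- Let $1 < \alpha < 2$. Consider the map $T: (-\infty, 0] \times (0,\infty) \to (0,1] \times (0,\infty)$ given by $T(s,u) = (m(-s),\, m(-s)\,u)$ where $m(r) = \big(\frac{\alpha\Gamma(\alpha)}{r + \alpha\Gamma(\alpha)}\big)^{1/(\alpha-1)}$. Then the pushforward under $T$ of the measure $ds \times \frac{1}{\Gamma(\alpha)\Gamma(2-\alpha)} u^{-1-\alpha}\, du$ is the measure $dx \times \frac{\alpha(\alpha-1)}{\Gamma(2-\alpha)} y^{-\alpha-1}\, dy$ on $(0,1] \times (0,\infty)$. -/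
/-!
Write `A = αΓ(α)`. The map factors through `s ↦ x = m(-s)`, whose inverse `s = -A(x^{1-α} - 1)`
has Jacobian `A(α-1)x^{-α}`, and, for fixed `x`, the scaling `u ↦ y = xu`. The measure
`u^{-1-α} du` is homogeneous of degree `α` under scaling, so the fibre integral picks up a
factor `x^α`, which cancels the Jacobian `x^{-α}` and leaves the constant
`A(α-1)/(Γ(α)Γ(2-α)) = α(α-1)/Γ(2-α)`.
-/

open Real Set MeasureTheory
open scoped ENNReal

theorem lintegral_Ioi_rpow_comp_mul_left (c β : ℝ) {x : ℝ} (hx : 0 < x) (G : ℝ → ℝ≥0∞) :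
    ∫⁻ u in Ioi 0, ENNReal.ofReal (c * u ^ (-1 - β)) * G (x * u) =
      ENNReal.ofReal (x ^ β) * ∫⁻ y in Ioi 0, ENNReal.ofReal (c * y ^ (-1 - β)) * G y := by
  have hderiv : ∀ u ∈ Ioi (0 : ℝ), HasDerivWithinAt (x * ·) x (Ioi 0) u := fun u _ => by
    simpa using ((hasDerivAt_id u).const_mul x).hasDerivWithinAt
  conv_rhs => rw [← image_const_mul_Ioi_zero hx, lintegral_image_eq_lintegral_abs_deriv_mul
    measurableSet_Ioi hderiv (mul_right_injective₀ hx.ne').injOn,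
    ← lintegral_const_mul' _ _ ENNReal.ofReal_ne_top]
  refine setLIntegral_congr_fun measurableSet_Ioi fun u (hu : 0 < u) => ?_
  have hscale : c * u ^ (-1 - β) = x ^ β * |x| * c * (x * u) ^ (-1 - β) := by
    rw [abs_of_pos hx, mul_rpow hx.le hu.le, rpow_sub hx, rpow_neg_one]
    field_simp
  rw [← mul_assoc, ← ENNReal.ofReal_mul (by positivity), ← mul_assoc,
    ← ENNReal.ofReal_mul (by positivity), ← mul_assoc, ← hscale]

noncomputable def timeChange (A α r : ℝ) : ℝ := (A / (r + A)) ^ (1 / (α - 1))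

noncomputable def timeChangeInv (A α x : ℝ) : ℝ := A * (x ^ (1 - α) - 1)

section TimeChange

variable {A α : ℝ}

theorem timeChange_mem_Ioc (hA : 0 < A) (hα : 1 < α) {r : ℝ} (hr : 0 ≤ r) :
    timeChange A α r ∈ Ioc 0 1 := by
  have hbase : 0 < A / (r + A) := by positivity
  refine ⟨rpow_pos_of_pos hbase _, rpow_le_one hbase.le ?_ (one_div_nonneg.mpr (by linarith))⟩
  rw [div_le_one (by positivity)]
  linarith

theorem timeChangeInv_timeChange (hA : 0 < A) (hα : α ≠ 1) {r : ℝ} (hr : 0 < r + A) :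
    timeChangeInv A α (timeChange A α r) = r := by
  have hexp : 1 / (α - 1) * (1 - α) = -1 := by
    field_simp [sub_ne_zero.mpr hα]
    ring
  rw [timeChangeInv, timeChange, ← rpow_mul (by positivity), hexp, rpow_neg_one, inv_div]
  field_simp
  ring

theorem timeChange_timeChangeInv (hA : A ≠ 0) (hα : α ≠ 1) {x : ℝ} (hx : 0 < x) :
    timeChange A α (timeChangeInv A α x) = x := by
  have hbase : A / (timeChangeInv A α x + A) = x ^ (α - 1) := by
    rw [timeChangeInv, show A * (x ^ (1 - α) - 1) + A = A * x ^ (1 - α) by ring,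
      show 1 - α = -(α - 1) by ring, rpow_neg hx.le]
    field_simp
  rw [timeChange, hbase, ← rpow_mul hx.le, mul_one_div_cancel (sub_ne_zero.mpr hα), rpow_one]

theorem hasDerivAt_timeChangeInv {x : ℝ} (hx : 0 < x) :
    HasDerivAt (timeChangeInv A α) (A * ((1 - α) * x ^ (-α))) x := by
  have h := ((hasDerivAt_rpow_const (p := 1 - α) (Or.inl hx.ne')).sub_const 1).const_mul A
  rwa [sub_sub_cancel_left] at h

theorem image_neg_timeChangeInv_Ioc (hA : 0 < A) (hα : 1 < α) :
    (fun x => -timeChangeInv A α x) '' Ioc 0 1 = Iic 0 := by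
  ext s
  constructor
  · rintro ⟨x, hx, rfl⟩
    have hpow : 1 ≤ x ^ (1 - α) := one_le_rpow_of_pos_of_le_one_of_nonpos hx.1 hx.2 (by linarith)
    simp only [timeChangeInv, mem_Iic, neg_nonpos]
    nlinarith
  · intro (hs : s ≤ 0)
    refine ⟨timeChange A α (-s), timeChange_mem_Ioc hA hα (by linarith), ?_⟩
    dsimp only
    rw [timeChangeInv_timeChange hA hα.ne' (by linarith), neg_neg]

theorem lintegral_Iic_comp_timeChange_neg (hA : 0 < A) (hα : 1 < α) (H : ℝ → ℝ≥0∞) :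
    ∫⁻ s in Iic 0, H (timeChange A α (-s)) =
      ∫⁻ x in Ioc 0 1, ENNReal.ofReal (A * (α - 1) * x ^ (-α)) * H x := by
  have hderiv : ∀ x ∈ Ioc (0 : ℝ) 1, HasDerivWithinAt (fun x => -timeChangeInv A α x)
      (A * (α - 1) * x ^ (-α)) (Ioc 0 1) x := fun x hx =>
    (hasDerivAt_timeChangeInv hx.1).neg.hasDerivWithinAt.congr_deriv (by ring)
  have hinj : InjOn (fun x => -timeChangeInv A α x) (Ioc 0 1) := fun x hx y hy hxy => by
    rw [← timeChange_timeChangeInv hA.ne' hα.ne' hx.1,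
      ← timeChange_timeChangeInv hA.ne' hα.ne' hy.1, neg_inj.mp hxy]
  rw [← image_neg_timeChangeInv_Ioc hA hα,
    lintegral_image_eq_lintegral_abs_deriv_mul measurableSet_Ioc hderiv hinj]
  refine setLIntegral_congr_fun measurableSet_Ioc fun x hx => ?_
  have hjac : 0 < A * (α - 1) * x ^ (-α) :=
    mul_pos (mul_pos hA (sub_pos.mpr hα)) (rpow_pos_of_pos hx.1 _)
  rw [abs_of_pos hjac, neg_neg, timeChange_timeChangeInv hA.ne' hα.ne' hx.1]

end TimeChange

theorem stmt_10_general (α : ℝ) (hα1 : 1 < α)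
    (m : ℝ → ℝ)
    (hm : ∀ r : ℝ, m r = (α * Real.Gamma α / (r + α * Real.Gamma α)) ^ (1 / (α - 1)))
    (T : ℝ × ℝ → ℝ × ℝ) (hT : ∀ p : ℝ × ℝ, T p = (m (-p.1), m (-p.1) * p.2)) :
    Measure.map T
      (((volume.restrict (Iic (0 : ℝ))).prod (volume.restrict (Ioi (0 : ℝ)))).withDensity
        (fun p => ENNReal.ofReal
          (1 / (Real.Gamma α * Real.Gamma (2 - α)) * p.2 ^ (-1 - α)))) =
    (((volume.restrict (Ioc (0 : ℝ) 1)).prod (volume.restrict (Ioi (0 : ℝ)))).withDensity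
        (fun p => ENNReal.ofReal
          (α * (α - 1) / Real.Gamma (2 - α) * p.2 ^ (-α - 1)))) := by
  have hA : 0 < α * Gamma α := mul_pos (by linarith) (Gamma_pos_of_pos (by linarith))
  obtain rfl : m = timeChange (α * Gamma α) α := funext hm
  have hTm : Measurable T := by
    rw [funext hT]; unfold timeChange; fun_prop
  refine Measure.ext_of_lintegral _ fun F hF => ?_
  rw [lintegral_map hF hTm, lintegral_withDensity_eq_lintegral_mul _ (by fun_prop) (by fun_prop),
    lintegral_withDensity_eq_lintegral_mul _ (by fun_prop) hF,
    lintegral_prod _ (by fun_prop), lintegral_prod _ (by fun_prop)]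
  simp only [Pi.mul_apply, hT]
  have hC : α * (α - 1) / Gamma (2 - α) =
      α * Gamma α * (α - 1) * (1 / (Gamma α * Gamma (2 - α))) := by
    have := (Gamma_pos_of_pos (by linarith : 0 < α)).ne'
    field_simp
  set A := α * Gamma α
  set c := 1 / (Gamma α * Gamma (2 - α))
  rw [hC, show -α - 1 = -1 - α by ring]
  calc _ = ∫⁻ s in Iic 0, ENNReal.ofReal (timeChange A α (-s) ^ α) *
        ∫⁻ y in Ioi 0, ENNReal.ofReal (c * y ^ (-1 - α)) * F (timeChange A α (-s), y) :=
        setLIntegral_congr_fun measurableSet_Iic fun s (hs : s ≤ 0) =>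
          lintegral_Ioi_rpow_comp_mul_left c α
            (timeChange_mem_Ioc hA hα1 (neg_nonneg.mpr hs)).1 _
    _ = ∫⁻ x in Ioc 0 1, ENNReal.ofReal (A * (α - 1) * x ^ (-α)) * (ENNReal.ofReal (x ^ α) *
        ∫⁻ y in Ioi 0, ENNReal.ofReal (c * y ^ (-1 - α)) * F (x, y)) :=
        lintegral_Iic_comp_timeChange_neg hA hα1 fun x => ENNReal.ofReal (x ^ α) *
          ∫⁻ y in Ioi 0, ENNReal.ofReal (c * y ^ (-1 - α)) * F (x, y)
    _ = _ := setLIntegral_congr_fun measurableSet_Ioc fun x hx => by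
        have hcancel : A * (α - 1) * x ^ (-α) * x ^ α = A * (α - 1) := by
          rw [mul_assoc, ← rpow_add hx.1, neg_add_cancel, rpow_zero, mul_one]
        rw [← mul_assoc, ← ENNReal.ofReal_mul (by have := hx.1; positivity), hcancel,
          ← lintegral_const_mul' _ _ ENNReal.ofReal_ne_top]
        refine lintegral_congr fun y => ?_
        rw [← mul_assoc, ← ENNReal.ofReal_mul (mul_nonneg hA.le (by linarith))]
        ring_nf

/-- The pushforward of `ds × (1/(Γ(α)Γ(2-α))) u^{-1-α} du` on `(-∞,0] × (0,∞)` under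
`(s,u) ↦ (m(-s), m(-s)u)`, with `m(r) = (αΓ(α)/(r+αΓ(α)))^{1/(α-1)}`, is the measure
`dx × (α(α-1)/Γ(2-α)) y^{-α-1} dy` on `(0,1] × (0,∞)`. -/
theorem stmt_10 (α : ℝ) (hα1 : 1 < α) (hα2 : α < 2)
    (m : ℝ → ℝ)
    (hm : ∀ r : ℝ, m r = (α * Real.Gamma α / (r + α * Real.Gamma α)) ^ (1 / (α - 1)))
    (T : ℝ × ℝ → ℝ × ℝ) (hT : ∀ p : ℝ × ℝ, T p = (m (-p.1), m (-p.1) * p.2)) :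
    Measure.map T
      (((volume.restrict (Iic (0 : ℝ))).prod (volume.restrict (Ioi (0 : ℝ)))).withDensity
        (fun p => ENNReal.ofReal
          (1 / (Real.Gamma α * Real.Gamma (2 - α)) * p.2 ^ (-1 - α)))) =
    (((volume.restrict (Ioc (0 : ℝ) 1)).prod (volume.restrict (Ioi (0 : ℝ)))).withDensity
        (fun p => ENNReal.ofReal
          (α * (α - 1) / Real.Gamma (2 - α) * p.2 ^ (-α - 1)))) :=
  stmt_10_general α hα1 m hm T hT
end
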